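/- Let (A_k, B_k) be the softImpute-ALS iterates: A_{k+1} minimizes Z₁ ↦ Q_A(Z₁|A_k,B_k) and B_{k+1} minimizes Z₂ ↦ Q_B(Z₂|A_{k+1},B_k). Then for every k, F(A_k,B_k) − F(A_{k+1},B_{k+1}) ≥ (1/2)(‖(A_k − A_{k+1})B_kᵀ‖_F² + ‖A_{k+1}(B_{k+1} − B_k)ᵀ‖_F²) + (λ/2)(‖A_k − A_{k+1}‖_F² + ‖B_{k+1} − B_k‖_F²). -/
import Mathlib


noncomputable section

open Matrix Filter

/-- Squared Frobenius norm of a real matrix. -/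
def frobSq {m n : ℕ} (M : Matrix (Fin m) (Fin n) ℝ) : ℝ := ∑ i, ∑ j, (M i j) ^ 2

/-- `P_Ω`: keep the entries in `Ω`, zero out the rest. -/
def proj {m n : ℕ} (Ω : Finset (Fin m × Fin n)) (Y : Matrix (Fin m) (Fin n) ℝ) :
    Matrix (Fin m) (Fin n) ℝ := Matrix.of fun i j => if (i, j) ∈ Ω then Y i j else 0

/-- `P_Ω^⊥`: zero out the entries in `Ω`, keep the rest. -/
def projPerp {m n : ℕ} (Ω : Finset (Fin m × Fin n)) (Y : Matrix (Fin m) (Fin n) ℝ) :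
    Matrix (Fin m) (Fin n) ℝ := Matrix.of fun i j => if (i, j) ∈ Ω then 0 else Y i j

/-- `F(A,B) = (1/2)‖P_Ω(X − ABᵀ)‖_F² + (λ/2)(‖A‖_F² + ‖B‖_F²)`. -/
def Fobj {m n r : ℕ} (Ω : Finset (Fin m × Fin n)) (X : Matrix (Fin m) (Fin n) ℝ) (lam : ℝ)
    (A : Matrix (Fin m) (Fin r) ℝ) (B : Matrix (Fin n) (Fin r) ℝ) : ℝ :=
  (1 / 2) * frobSq (proj Ω (X - A * Bᵀ)) + (lam / 2) * (frobSq A + frobSq B)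

/-- `Q_A(Z₁|A,B)`. -/
def QA {m n r : ℕ} (Ω : Finset (Fin m × Fin n)) (X : Matrix (Fin m) (Fin n) ℝ) (lam : ℝ)
    (Z₁ : Matrix (Fin m) (Fin r) ℝ) (A : Matrix (Fin m) (Fin r) ℝ)
    (B : Matrix (Fin n) (Fin r) ℝ) : ℝ :=
  (1 / 2) * frobSq (proj Ω (X - Z₁ * Bᵀ) + projPerp Ω (A * Bᵀ - Z₁ * Bᵀ)) +
    (lam / 2) * frobSq Z₁ + (lam / 2) * frobSq B

/-- `Q_B(Z₂|A,B)`. -/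
def QB {m n r : ℕ} (Ω : Finset (Fin m × Fin n)) (X : Matrix (Fin m) (Fin n) ℝ) (lam : ℝ)
    (Z₂ : Matrix (Fin n) (Fin r) ℝ) (A : Matrix (Fin m) (Fin r) ℝ)
    (B : Matrix (Fin n) (Fin r) ℝ) : ℝ :=
  (1 / 2) * frobSq (proj Ω (X - A * Z₂ᵀ) + projPerp Ω (A * Bᵀ - A * Z₂ᵀ)) +
    (lam / 2) * frobSq A + (lam / 2) * frobSq Z₂

/-- `(A_k, B_k)` are softImpute-ALS iterates: `A_{k+1} ∈ argmin Q_A(·|A_k,B_k)` and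
`B_{k+1} ∈ argmin Q_B(·|A_{k+1},B_k)`. -/
def SoftImputeALS {m n r : ℕ} (Ω : Finset (Fin m × Fin n)) (X : Matrix (Fin m) (Fin n) ℝ)
    (lam : ℝ) (A : ℕ → Matrix (Fin m) (Fin r) ℝ) (B : ℕ → Matrix (Fin n) (Fin r) ℝ) : Prop :=
  ∀ k : ℕ,
    (∀ Z₁ : Matrix (Fin m) (Fin r) ℝ,
      QA Ω X lam (A (k + 1)) (A k) (B k) ≤ QA Ω X lam Z₁ (A k) (B k)) ∧
    (∀ Z₂ : Matrix (Fin n) (Fin r) ℝ,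
      QB Ω X lam (B (k + 1)) (A (k + 1)) (B k) ≤ QB Ω X lam Z₂ (A (k + 1)) (B k))

/-! ### Auxiliary lemmas -/

/-- Frobenius inner product. -/
def fdot {m n : ℕ} (M N : Matrix (Fin m) (Fin n) ℝ) : ℝ := ∑ i, ∑ j, M i j * N i j

lemma frobSq_nonneg {m n : ℕ} (M : Matrix (Fin m) (Fin n) ℝ) : 0 ≤ frobSq M :=
  Finset.sum_nonneg fun _ _ => Finset.sum_nonneg fun _ _ => sq_nonneg _

lemma frobSq_neg {m n : ℕ} (M : Matrix (Fin m) (Fin n) ℝ) : frobSq (-M) = frobSq M := by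
  simp [frobSq]

lemma frobSq_transpose {m n : ℕ} (M : Matrix (Fin m) (Fin n) ℝ) : frobSq Mᵀ = frobSq M := by
  simp [frobSq]; exact Finset.sum_comm

lemma frobSq_sub_smul {m n : ℕ} (M N : Matrix (Fin m) (Fin n) ℝ) (t : ℝ) :
    frobSq (M - t • N) = frobSq M - 2*t*fdot M N + t^2 * frobSq N := by
  calc frobSq (M - t • N)
      = ∑ i, ∑ j, (M i j^2 - 2*t*(M i j * N i j) + t^2 * N i j^2) := by
        refine Finset.sum_congr rfl fun i _ => Finset.sum_congr rfl fun j _ => ?_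
        simp [frobSq, Matrix.sub_apply]; ring
    _ = frobSq M - 2*t*fdot M N + t^2 * frobSq N := by
        simp only [frobSq, fdot, Finset.sum_add_distrib, Finset.sum_sub_distrib,
          Finset.mul_sum]

lemma frobSq_add_smul {m n : ℕ} (M N : Matrix (Fin m) (Fin n) ℝ) (t : ℝ) :
    frobSq (M + t • N) = frobSq M + 2*t*fdot M N + t^2 * frobSq N := by
  have := frobSq_sub_smul M N (-t)
  simp only [neg_smul, sub_neg_eq_add] at this
  rw [this]; ring

lemma frobSq_split {m n : ℕ} (Ω : Finset (Fin m × Fin n)) (Y Z : Matrix (Fin m) (Fin n) ℝ) :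
    frobSq (proj Ω Y + projPerp Ω Z) = frobSq (proj Ω Y) + frobSq (projPerp Ω Z) := by
  simp only [frobSq, proj, projPerp, Matrix.add_apply, Matrix.of_apply,
    ← Finset.sum_add_distrib]
  refine Finset.sum_congr rfl fun i _ => Finset.sum_congr rfl fun j _ => ?_
  split <;> ring

lemma proj_add_perp_eq {m n : ℕ} (Ω : Finset (Fin m × Fin n))
    (X W V : Matrix (Fin m) (Fin n) ℝ) :
    proj Ω (X - V) + projPerp Ω (W - V) = (proj Ω X + projPerp Ω W) - V := by
  ext i j
  simp only [proj, projPerp, Matrix.add_apply, Matrix.sub_apply, Matrix.of_apply]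
  split <;> ring

lemma quad_min {L P : ℝ} (h : ∀ t : ℝ, 0 ≤ t * L + t^2 * P) : 0 ≤ L := by
  have hP : 0 ≤ P := by nlinarith [h 1, h (-1)]
  refine le_of_forall_pos_le_add fun ε hε => ?_
  have hP1 : (0:ℝ) < P + 1 := by linarith
  have ht : 0 < ε/(P+1) := div_pos hε hP1
  have h2 := h (ε/(P+1))
  have h3 : 0 ≤ L + (ε/(P+1))*P := by
    rcases le_or_gt 0 (L + (ε/(P+1))*P) with h'|h'
    · exact h'
    · exfalso; nlinarith [mul_pos ht (neg_pos.mpr h')]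
  have h4 : (ε/(P+1))*P ≤ ε := by
    rw [div_mul_eq_mul_div, div_le_iff₀ hP1]; nlinarith
  linarith

/-- Generic ridge-regression objective. -/
def gval {m n r : ℕ} (Y : Matrix (Fin m) (Fin n) ℝ) (Bt : Matrix (Fin r) (Fin n) ℝ)
    (lam : ℝ) (Z : Matrix (Fin m) (Fin r) ℝ) : ℝ :=
  (1/2) * frobSq (Y - Z * Bt) + (lam/2) * frobSq Z

lemma gval_expand {m n r : ℕ} (Y : Matrix (Fin m) (Fin n) ℝ) (Bt : Matrix (Fin r) (Fin n) ℝ)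
    (lam : ℝ) (Zs D : Matrix (Fin m) (Fin r) ℝ) (t : ℝ) :
    gval Y Bt lam (Zs + t • D) = gval Y Bt lam Zs
      + t * (lam * fdot Zs D - fdot (Y - Zs * Bt) (D * Bt))
      + t^2 * ((1/2) * frobSq (D * Bt) + (lam/2) * frobSq D) := by
  have hmul : (Zs + t • D) * Bt = Zs * Bt + t • (D * Bt) := by
    rw [Matrix.add_mul, Matrix.smul_mul]
  have hsub : Y - (Zs + t • D) * Bt = (Y - Zs * Bt) - t • (D * Bt) := by
    rw [hmul]; abel
  unfold gval
  rw [hsub, frobSq_sub_smul, frobSq_add_smul]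
  ring

lemma gval_min {m n r : ℕ} {Y : Matrix (Fin m) (Fin n) ℝ} {Bt : Matrix (Fin r) (Fin n) ℝ}
    {lam : ℝ} {Zs : Matrix (Fin m) (Fin r) ℝ}
    (h : ∀ Z, gval Y Bt lam Zs ≤ gval Y Bt lam Z) (Z : Matrix (Fin m) (Fin r) ℝ) :
    gval Y Bt lam Zs + ((1/2) * frobSq ((Z - Zs) * Bt) + (lam/2) * frobSq (Z - Zs))
      ≤ gval Y Bt lam Z := by
  set D := Z - Zs with hD
  have hq : ∀ t : ℝ, 0 ≤ t * (lam * fdot Zs D - fdot (Y - Zs * Bt) (D * Bt))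
      + t^2 * ((1/2) * frobSq (D * Bt) + (lam/2) * frobSq D) := by
    intro t
    have := h (Zs + t • D)
    rw [gval_expand] at this
    linarith
  have hL := quad_min hq
  have hexp := gval_expand Y Bt lam Zs D 1
  rw [one_smul] at hexp
  have hZ : Zs + D = Z := by rw [hD]; abel
  rw [hZ] at hexp
  rw [hexp]; nlinarith [hL]

lemma QA_eq_gval {m n r : ℕ} (Ω : Finset (Fin m × Fin n)) (X : Matrix (Fin m) (Fin n) ℝ)
    (lam : ℝ) (Z A : Matrix (Fin m) (Fin r) ℝ) (B : Matrix (Fin n) (Fin r) ℝ) :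
    QA Ω X lam Z A B = gval (proj Ω X + projPerp Ω (A * Bᵀ)) Bᵀ lam Z
      + (lam/2) * frobSq B := by
  unfold QA gval
  rw [proj_add_perp_eq]

lemma QB_eq_gval {m n r : ℕ} (Ω : Finset (Fin m × Fin n)) (X : Matrix (Fin m) (Fin n) ℝ)
    (lam : ℝ) (Z : Matrix (Fin n) (Fin r) ℝ) (A : Matrix (Fin m) (Fin r) ℝ)
    (B : Matrix (Fin n) (Fin r) ℝ) :
    QB Ω X lam Z A B = gval (proj Ω X + projPerp Ω (A * Bᵀ))ᵀ Aᵀ lam Z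
      + (lam/2) * frobSq A := by
  unfold QB gval
  rw [proj_add_perp_eq]
  have : frobSq ((proj Ω X + projPerp Ω (A * Bᵀ))ᵀ - Z * Aᵀ)
      = frobSq (proj Ω X + projPerp Ω (A * Bᵀ) - A * Zᵀ) := by
    rw [← frobSq_transpose (proj Ω X + projPerp Ω (A * Bᵀ) - A * Zᵀ)]
    rw [Matrix.transpose_sub, Matrix.transpose_mul, Matrix.transpose_transpose]
  rw [this]
  ring

/-- `Q_A(Z|A,B) = F(Z,B) + (1/2)‖P_Ω^⊥((A−Z)Bᵀ)‖²`, hence `≥ F(Z,B)`. -/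
lemma F_le_QA {m n r : ℕ} (Ω : Finset (Fin m × Fin n)) (X : Matrix (Fin m) (Fin n) ℝ)
    (lam : ℝ) (Z A : Matrix (Fin m) (Fin r) ℝ) (B : Matrix (Fin n) (Fin r) ℝ) :
    Fobj Ω X lam Z B ≤ QA Ω X lam Z A B := by
  unfold QA Fobj
  rw [frobSq_split]
  nlinarith [frobSq_nonneg (projPerp Ω (A * Bᵀ - Z * Bᵀ))]

lemma F_le_QB {m n r : ℕ} (Ω : Finset (Fin m × Fin n)) (X : Matrix (Fin m) (Fin n) ℝ)
    (lam : ℝ) (Z : Matrix (Fin n) (Fin r) ℝ) (A : Matrix (Fin m) (Fin r) ℝ)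
    (B : Matrix (Fin n) (Fin r) ℝ) :
    Fobj Ω X lam A Z ≤ QB Ω X lam Z A B := by
  unfold QB Fobj
  rw [frobSq_split]
  nlinarith [frobSq_nonneg (projPerp Ω (A * Bᵀ - A * Zᵀ))]

lemma QA_self {m n r : ℕ} (Ω : Finset (Fin m × Fin n)) (X : Matrix (Fin m) (Fin n) ℝ)
    (lam : ℝ) (A : Matrix (Fin m) (Fin r) ℝ) (B : Matrix (Fin n) (Fin r) ℝ) :
    QA Ω X lam A A B = Fobj Ω X lam A B := by
  unfold QA Fobj
  rw [frobSq_split]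
  have : frobSq (projPerp Ω (A * Bᵀ - A * Bᵀ)) = 0 := by
    simp [projPerp, frobSq]
  rw [this]; ring

lemma QB_self {m n r : ℕ} (Ω : Finset (Fin m × Fin n)) (X : Matrix (Fin m) (Fin n) ℝ)
    (lam : ℝ) (A : Matrix (Fin m) (Fin r) ℝ) (B : Matrix (Fin n) (Fin r) ℝ) :
    QB Ω X lam B A B = Fobj Ω X lam A B := by
  unfold QB Fobj
  rw [frobSq_split]
  have : frobSq (projPerp Ω (A * Bᵀ - A * Bᵀ)) = 0 := by
    simp [projPerp, frobSq]
  rw [this]; ring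

theorem softImputeALS_sufficient_decrease {m n r : ℕ} (Ω : Finset (Fin m × Fin n))
    (X : Matrix (Fin m) (Fin n) ℝ) (lam : ℝ)
    (A : ℕ → Matrix (Fin m) (Fin r) ℝ) (B : ℕ → Matrix (Fin n) (Fin r) ℝ)
    (hALS : SoftImputeALS Ω X lam A B) :
    ∀ k : ℕ,
      Fobj Ω X lam (A k) (B k) - Fobj Ω X lam (A (k + 1)) (B (k + 1)) ≥
        (1 / 2) * (frobSq ((A k - A (k + 1)) * (B k)ᵀ) +
            frobSq (A (k + 1) * (B (k + 1) - B k)ᵀ)) +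
        (lam / 2) * (frobSq (A k - A (k + 1)) + frobSq (B (k + 1) - B k)) := by
  intro k
  obtain ⟨hA, hB⟩ := hALS k
  -- A-step via gval
  have hAg : ∀ Z, gval (proj Ω X + projPerp Ω (A k * (B k)ᵀ)) (B k)ᵀ lam (A (k+1))
      ≤ gval (proj Ω X + projPerp Ω (A k * (B k)ᵀ)) (B k)ᵀ lam Z := by
    intro Z
    have := hA Z
    rw [QA_eq_gval, QA_eq_gval] at this
    linarith
  have hAkey := gval_min hAg (A k)
  rw [show gval (proj Ω X + projPerp Ω (A k * (B k)ᵀ)) (B k)ᵀ lam (A (k+1))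
      = QA Ω X lam (A (k+1)) (A k) (B k) - (lam/2) * frobSq (B k) by
        rw [QA_eq_gval]; ring,
      show gval (proj Ω X + projPerp Ω (A k * (B k)ᵀ)) (B k)ᵀ lam (A k)
      = QA Ω X lam (A k) (A k) (B k) - (lam/2) * frobSq (B k) by
        rw [QA_eq_gval]; ring] at hAkey
  -- B-step via gval
  have hBg : ∀ Z, gval (proj Ω X + projPerp Ω (A (k+1) * (B k)ᵀ))ᵀ (A (k+1))ᵀ lam (B (k+1))
      ≤ gval (proj Ω X + projPerp Ω (A (k+1) * (B k)ᵀ))ᵀ (A (k+1))ᵀ lam Z := by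
    intro Z
    have := hB Z
    rw [QB_eq_gval, QB_eq_gval] at this
    linarith
  have hBkey := gval_min hBg (B k)
  rw [show gval (proj Ω X + projPerp Ω (A (k+1) * (B k)ᵀ))ᵀ (A (k+1))ᵀ lam (B (k+1))
      = QB Ω X lam (B (k+1)) (A (k+1)) (B k) - (lam/2) * frobSq (A (k+1)) by
        rw [QB_eq_gval]; ring,
      show gval (proj Ω X + projPerp Ω (A (k+1) * (B k)ᵀ))ᵀ (A (k+1))ᵀ lam (B k)
      = QB Ω X lam (B k) (A (k+1)) (B k) - (lam/2) * frobSq (A (k+1)) by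
        rw [QB_eq_gval]; ring] at hBkey
  -- rewrite the B-direction penalty terms
  have e1 : frobSq ((B k - B (k+1)) * (A (k+1))ᵀ) = frobSq (A (k+1) * (B (k+1) - B k)ᵀ) := by
    rw [← frobSq_transpose (A (k+1) * (B (k+1) - B k)ᵀ), Matrix.transpose_mul,
      Matrix.transpose_transpose, ← frobSq_neg ((B (k+1) - B k) * (A (k+1))ᵀ),
      ← Matrix.neg_mul]
    congr 1
    · abel
  have e2 : frobSq (B k - B (k+1)) = frobSq (B (k+1) - B k) := by
    rw [← frobSq_neg (B (k+1) - B k)]; congr 1; abel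
  rw [e1, e2] at hBkey
  -- chain everything
  have c1 : QA Ω X lam (A k) (A k) (B k) = Fobj Ω X lam (A k) (B k) := QA_self ..
  have c2 : Fobj Ω X lam (A (k+1)) (B k) ≤ QA Ω X lam (A (k+1)) (A k) (B k) := F_le_QA ..
  have c3 : QB Ω X lam (B k) (A (k+1)) (B k) = Fobj Ω X lam (A (k+1)) (B k) := QB_self ..
  have c4 : Fobj Ω X lam (A (k+1)) (B (k+1)) ≤ QB Ω X lam (B (k+1)) (A (k+1)) (B k) :=
    F_le_QB ..
  linarith

end
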